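/- arXiv:1712.03015 — 2 statements merged into one kernel-verified Lean document; each statement's English description precedes it below -/
import Mathlib

section
/- If H(x) denotes the number of non-zero integral ideals of the ring of integers O_K of a number field K with norm at most x, then the partial sums of reciprocal norms satisfy: sum over non-zero integral ideals a with N(a) ≤ x of 1/N(a) is asymptotic to c·log x as x → ∞, where c is the positive constant with H(x) = c·x + O(x^{1-1/d}), d = [K:ℚ]. -/
open Filter Topology NumberField Asymptotics

/-- Number of non-zero integral ideals of `𝓞 K` with absolute norm at most `x`. -/
noncomputable def idealCount (K : Type*) [Field K] [NumberField K] (x : ℕ) : ℕ :=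
  Nat.card {I : Ideal (𝓞 K) // I ≠ ⊥ ∧ Ideal.absNorm I ≤ x}

/-- Number of ideals in `S` (necessarily non-zero) with absolute norm at most `x`. -/
noncomputable def setCount (K : Type*) [Field K] [NumberField K]
    (S : Set (Ideal (𝓞 K))) (x : ℕ) : ℕ :=
  Nat.card {I : Ideal (𝓞 K) // I ∈ S ∧ I ≠ ⊥ ∧ Ideal.absNorm I ≤ x}

/-- Sum of reciprocal norms `∑_{b ∈ S, N b ≤ x} 1 / N b` over non-zero ideals of `S`. -/
noncomputable def partialSum (K : Type*) [Field K] [NumberField K]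
    (S : Set (Ideal (𝓞 K))) (x : ℕ) : ℝ :=
  ∑ k ∈ Finset.Icc 1 x,
    (Nat.card {I : Ideal (𝓞 K) // I ∈ S ∧ Ideal.absNorm I = k} : ℝ) / k

/-! Write `H(x) = c x + E(x)` with `E(x) = O(x^θ)`, `θ = 1 - 1/d < 1`. Partial summation gives
`∑_{N a ≤ n} 1 / N a = c (1 + 1/2 + ⋯ + 1/n) + E(n)/n + ∑_{k < n} E(k) (1/k - 1/(k+1))`.
Since `E(k) (1/k - 1/(k+1)) = O(k^(θ-2))` the series converges, so the partial
sums differ from `c log n` by a convergent sequence. -/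

open Finset

-- The `k = 0` summand on the right is `-F 0`, because `1 / 0 = 0`.
theorem sum_Icc_sub_div_by_parts (F : ℕ → ℝ) (n : ℕ) :
    ∑ k ∈ Icc 1 n, (F k - F (k - 1)) / k
      = F n / n + ∑ k ∈ range n, F k * (1 / k - 1 / (k + 1)) := by
  induction n with
  | zero => simp
  | succ n ih =>
    rw [sum_Icc_succ_top (Nat.le_add_left 1 n), ih, sum_range_succ]
    rcases n.eq_zero_or_pos with rfl | hn
    · simp [sub_eq_add_neg]
    · push_cast
      field_simp
      ring

theorem isBigO_one_div_sub_one_div_succ :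
    (fun k : ℕ => 1 / (k : ℝ) - 1 / (k + 1)) =O[atTop] fun k => (k : ℝ) ^ (-2 : ℝ) := by
  refine IsBigO.of_bound 1 ?_
  filter_upwards [eventually_ge_atTop 1] with k hk
  have hk0 : (0 : ℝ) < k := by exact_mod_cast hk
  have hdiff : 1 / (k : ℝ) - 1 / (k + 1) = ((k : ℝ) * (k + 1))⁻¹ := by field_simp; ring
  rw [hdiff, Real.rpow_neg hk0.le, Real.rpow_two, one_mul, norm_inv, norm_inv,
    Real.norm_of_nonneg (by positivity), Real.norm_of_nonneg (by positivity)]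
  gcongr
  linarith

section PartialSummation

variable {E : ℕ → ℝ} {θ : ℝ}

theorem tendsto_div_natCast_of_isBigO_rpow (hθ : θ < 1)
    (hE : E =O[atTop] fun k => (k : ℝ) ^ θ) :
    Tendsto (fun n => E n / n) atTop (𝓝 0) := by
  have hdiv : (fun n => E n / n) =O[atTop] fun n : ℕ => (n : ℝ) ^ (θ - 1) := by
    refine (hE.mul (isBigO_refl (fun n : ℕ => (n : ℝ) ^ (-1 : ℝ)) atTop)).congr'
      (Eventually.of_forall fun n => by simp [Real.rpow_neg_one, div_eq_mul_inv]) ?_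
    filter_upwards [eventually_gt_atTop 0] with n hn
    rw [← Real.rpow_add (by exact_mod_cast hn), sub_eq_add_neg]
  refine hdiv.trans_tendsto ?_
  simpa [neg_sub, Function.comp_def] using
    (tendsto_rpow_neg_atTop (sub_pos.2 hθ)).comp tendsto_natCast_atTop_atTop

theorem summable_mul_one_div_sub_one_div_succ_of_isBigO_rpow (hθ : θ < 1)
    (hE : E =O[atTop] fun k => (k : ℝ) ^ θ) :
    Summable fun k : ℕ => E k * (1 / k - 1 / (k + 1)) := by
  refine summable_of_isBigO_nat (Real.summable_nat_rpow.2 (by linarith : θ - 2 < -1)) ?_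
  refine (hE.mul isBigO_one_div_sub_one_div_succ).congr' EventuallyEq.rfl ?_
  filter_upwards [eventually_gt_atTop 0] with k hk
  rw [← Real.rpow_add (by exact_mod_cast hk), sub_eq_add_neg]

theorem tendsto_sum_Icc_sub_div_of_isBigO_rpow (hθ : θ < 1)
    (hE : E =O[atTop] fun k => (k : ℝ) ^ θ) :
    Tendsto (fun n => ∑ k ∈ Icc 1 n, (E k - E (k - 1)) / k) atTop
      (𝓝 (∑' k : ℕ, E k * (1 / k - 1 / (k + 1)))) := by
  simp_rw [sum_Icc_sub_div_by_parts]
  simpa using (tendsto_div_natCast_of_isBigO_rpow hθ hE).add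
    (summable_mul_one_div_sub_one_div_succ_of_isBigO_rpow hθ hE).hasSum.tendsto_sum_nat

end PartialSummation

section IdealCount

variable (K : Type*) [Field K] [NumberField K]

theorem setOf_absNorm_le_succ_eq_union (x : ℕ) :
    {I : Ideal (𝓞 K) | I ≠ ⊥ ∧ Ideal.absNorm I ≤ x + 1}
      = {I | I ≠ ⊥ ∧ Ideal.absNorm I ≤ x} ∪ {I | I ∈ Set.univ ∧ Ideal.absNorm I = x + 1} := by
  ext I
  simp only [Set.mem_ofPred_eq, Set.mem_union, Set.mem_univ, true_and, ne_eq,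
    ← Ideal.absNorm_eq_zero_iff]
  omega

theorem idealCount_succ (x : ℕ) :
    idealCount K (x + 1) = idealCount K x
      + Nat.card {I : Ideal (𝓞 K) // I ∈ Set.univ ∧ Ideal.absNorm I = x + 1} := by
  have hdisj : Disjoint {I : Ideal (𝓞 K) | I ≠ ⊥ ∧ Ideal.absNorm I ≤ x}
      {I | I ∈ Set.univ ∧ Ideal.absNorm I = x + 1} :=
    Set.disjoint_left.2 fun I hle heq => by simp_all
  have hcard (p : Ideal (𝓞 K) → Prop) : Nat.card {I // p I} = {I | p I}.ncard :=
    Nat.card_coe_set_eq _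
  simp only [idealCount, hcard]
  rw [setOf_absNorm_le_succ_eq_union, Set.ncard_union_eq hdisj
    ((Ideal.finite_setOfPred_absNorm_le x).subset fun I h => h.2)
    ((Ideal.finite_setOfPred_absNorm_eq (x + 1)).subset fun I h => h.2)]

theorem partialSum_univ_eq_sum_sub_div (n : ℕ) :
    partialSum K Set.univ n
      = ∑ k ∈ Icc 1 n, ((idealCount K k : ℝ) - idealCount K (k - 1)) / k := by
  refine sum_congr rfl fun k hk => ?_
  obtain ⟨j, rfl⟩ : ∃ j, k = j + 1 := ⟨k - 1, by grind⟩
  rw [Nat.add_sub_cancel, idealCount_succ]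
  push_cast
  ring

theorem partialSum_univ_eq_mul_harmonic_add {E : ℕ → ℝ} (c : ℝ)
    (hE : ∀ k, E k = idealCount K k - c * k) (n : ℕ) :
    partialSum K Set.univ n = c * harmonic n + ∑ k ∈ Icc 1 n, (E k - E (k - 1)) / k := by
  rw [partialSum_univ_eq_sum_sub_div, harmonic_eq_sum_Icc]
  push_cast
  rw [mul_sum, ← sum_add_distrib]
  refine sum_congr rfl fun k hk => ?_
  rw [hE, hE, Nat.cast_sub (mem_Icc.1 hk).1]
  field_simp
  ring

end IdealCount

/-- the partial sums of reciprocal norms are asymptotic to `c log x`,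
where `c` is the constant in the ideal counting theorem `H(x) = c x + O(x^(1-1/d))`. -/
theorem partialSum_univ_isEquivalent_log (K : Type*) [Field K] [NumberField K]
    (c : ℝ) (hc : 0 < c)
    (hH : (fun x : ℕ => (idealCount K x : ℝ) - c * x) =O[atTop]
      (fun x : ℕ => (x : ℝ) ^ ((1 : ℝ) - 1 / (Module.finrank ℚ K)))) :
    (fun x : ℕ => partialSum K Set.univ x) ~[atTop] (fun x : ℕ => c * Real.log x) := by
  have hθ : 1 - 1 / (Module.finrank ℚ K : ℝ) < 1 := by
    have := Module.finrank_pos (R := ℚ) (M := K)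
    simp only [sub_lt_self_iff, one_div, inv_pos, Nat.cast_pos, this]
  have hdiff : Tendsto (fun n : ℕ => partialSum K Set.univ n - c * Real.log n) atTop
      (𝓝 (c * Real.eulerMascheroniConstant + _)) :=
    ((Real.tendsto_harmonic_sub_log.const_mul c).add
      (tendsto_sum_Icc_sub_div_of_isBigO_rpow hθ hH)).congr fun n => by
        rw [partialSum_univ_eq_mul_harmonic_add K c (fun _ => rfl)]
        ring
  have hlog : Tendsto (fun n : ℕ => ‖c * Real.log n‖) atTop atTop :=
    tendsto_norm_atTop_atTop.comp
      ((Real.tendsto_log_atTop.comp tendsto_natCast_atTop_atTop).const_mul_atTop hc)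
  exact (hdiff.isBigO_one ℝ).trans_isLittleO ((isLittleO_one_left_iff ℝ).2 hlog)
end

section
/- With the prime ideals of O_K enumerated as p_1, p_2, … in order of non-decreasing norm, and B_k := Π_k^{-1} Σ_{b'} 1/N(b') where b' ranges over the p_1,…,p_k-ideals that are multiples of some a ∈ 𝒜 and Π_k = Π_{i=1}^k (1-1/N(p_i))^{-1}, the sequence (B_k) is non-decreasing and bounded above by 1, hence converges. -/
open Filter Topology NumberField Asymptotics

/-- A non-zero integral ideal all of whose prime factors lie in the set `P`. -/
def IsSmoothIdeal (K : Type*) [Field K] [NumberField K]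
    (P : Set (Ideal (𝓞 K))) (n : Ideal (𝓞 K)) : Prop :=
  n ≠ ⊥ ∧ ∀ q : Ideal (𝓞 K), q.IsPrime → q ≠ ⊥ → n ≤ q → q ∈ P

/-- `B_k = Π_k⁻¹ · ∑ 1/N(b′)`, the sum ranging over the `p_0,…,p_{k-1}`-ideals that are
multiples of some member of `𝒜`, where `Π_k = ∏_{i<k} (1 - 1/N(p_i))⁻¹`. -/
noncomputable def multB (K : Type*) [Field K] [NumberField K]
    (𝒜 : Set (Ideal (𝓞 K))) (p : ℕ → Ideal (𝓞 K)) (k : ℕ) : ℝ :=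
  (∏ i ∈ Finset.range k, (1 - ((Ideal.absNorm (p i) : ℝ))⁻¹)⁻¹)⁻¹ *
    ∑' b : {b : Ideal (𝓞 K) //
        IsSmoothIdeal K (p '' Set.Iio k) b ∧ ∃ a ∈ 𝒜, b ≤ a},
      ((Ideal.absNorm (b : Ideal (𝓞 K)) : ℝ))⁻¹

/-! Every `p_0,…,p_k`-ideal is `p_k ^ j * c` for a unique `j` and a unique `p_0,…,p_{k-1}`-ideal
`c`, and `N(p_k ^ j * c)⁻¹ = N(p_k)⁻ʲ N(c)⁻¹`. Summing the geometric series over `j` shows that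
`∑ 1/N(b)` over all `p_0,…,p_{k-1}`-ideals is exactly `Π_k`, so `B_k ≤ 1`. Since `p_k ^ j * c` is a
multiple of `a` whenever `c` is, the sum over the multiples gains at least the factor
`(1 - 1/N(p_k))⁻¹ = Π_{k+1}/Π_k` when passing from `k` to `k + 1`, so `B_k ≤ B_{k+1}`. All sums are
taken in `ℝ≥0∞`, where no summability has to be checked. -/

open scoped ENNReal

theorem pow_mul_eq_pow_mul_iff_of_not_dvd {M : Type*} [CommMonoidWithZero M] [IsCancelMulZero M]
    {q c c' : M} (hq : q ≠ 0) (hc : ¬ q ∣ c) (hc' : ¬ q ∣ c') {j j' : ℕ} :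
    q ^ j * c = q ^ j' * c' ↔ j = j' ∧ c = c' := by
  refine ⟨fun h => ?_, fun ⟨hj, hc⟩ => hj ▸ hc ▸ rfl⟩
  wlog hle : j ≤ j' generalizing j j' c c'
  · exact (this hc' hc h.symm (le_of_not_ge hle)).imp Eq.symm Eq.symm
  obtain ⟨m, rfl⟩ := Nat.exists_eq_add_of_le hle
  rw [pow_add, mul_assoc] at h
  have hcm : c = q ^ m * c' := mul_left_cancel₀ (pow_ne_zero _ hq) h
  rcases m with _ | m
  · simpa using hcm
  · exact absurd (hcm ▸ (dvd_pow_self q m.succ_ne_zero).mul_right c') hc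

section AbsNorm

variable {S : Type*} [CommRing S] [IsDedekindDomain S] [Module.Free ℤ S]

noncomputable def eulerFactor (q : Ideal S) : ℝ≥0∞ :=
  (1 - (Ideal.absNorm q : ℝ≥0∞)⁻¹)⁻¹

theorem eulerFactor_ne_zero (q : Ideal S) : eulerFactor q ≠ 0 :=
  ENNReal.inv_ne_zero.mpr (ne_top_of_le_ne_top ENNReal.one_ne_top tsub_le_self)

noncomputable def invNormSum (W : Set (Ideal S)) : ℝ≥0∞ :=
  ∑' b : W, (Ideal.absNorm (b : Ideal S) : ℝ≥0∞)⁻¹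

theorem invNormSum_mono {W W' : Set (Ideal S)} (h : W ⊆ W') : invNormSum W ≤ invNormSum W' :=
  ENNReal.tsum_mono_subtype (fun b => (Ideal.absNorm b : ℝ≥0∞)⁻¹) h

theorem invNormSum_range_pow_mul (q : Ideal S) (W : Set (Ideal S))
    (hinj : Function.Injective fun x : ℕ × W => q ^ x.1 * (x.2 : Ideal S)) :
    invNormSum (Set.range fun x : ℕ × W => q ^ x.1 * (x.2 : Ideal S)) =
      eulerFactor q * invNormSum W := by
  have hterm : ∀ (j : ℕ) (c : Ideal S), (Ideal.absNorm (q ^ j * c) : ℝ≥0∞)⁻¹ =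
      (Ideal.absNorm q : ℝ≥0∞)⁻¹ ^ j * (Ideal.absNorm c : ℝ≥0∞)⁻¹ := fun j c => by
    rw [map_mul, map_pow, Nat.cast_mul, Nat.cast_pow,
      ENNReal.mul_inv (.inr (ENNReal.natCast_ne_top _))
        (.inl (ENNReal.pow_ne_top (ENNReal.natCast_ne_top _))), ENNReal.inv_pow]
  rw [invNormSum, tsum_range (fun b => (Ideal.absNorm b : ℝ≥0∞)⁻¹) hinj, ENNReal.tsum_prod']
  simp only [hterm, ENNReal.tsum_mul_left, ENNReal.tsum_mul_right, ENNReal.tsum_geometric]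
  rfl

variable [Module.Finite ℤ S]

theorem Ideal.two_le_absNorm_of_isPrime {q : Ideal S} (hq : q.IsPrime) (hq0 : q ≠ ⊥) :
    2 ≤ Ideal.absNorm q := by
  have h0 : Ideal.absNorm q ≠ 0 := mt Ideal.absNorm_eq_zero_iff.mp hq0
  have h1 : Ideal.absNorm q ≠ 1 := mt Ideal.absNorm_eq_one_iff.mp hq.ne_top
  omega

theorem eulerFactor_ne_top {q : Ideal S} (hq : q.IsPrime) (hq0 : q ≠ ⊥) :
    eulerFactor q ≠ ⊤ := by
  have hlt : (Ideal.absNorm q : ℝ≥0∞)⁻¹ < 1 := by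
    rw [ENNReal.inv_lt_one]
    exact_mod_cast (Ideal.two_le_absNorm_of_isPrime hq hq0 : 1 < Ideal.absNorm q)
  exact ENNReal.inv_ne_top.mpr (tsub_pos_iff_lt.mpr hlt).ne'

theorem toReal_eulerFactor {q : Ideal S} (hq0 : q ≠ ⊥) :
    (eulerFactor q).toReal = (1 - (Ideal.absNorm q : ℝ)⁻¹)⁻¹ := by
  have hle : (Ideal.absNorm q : ℝ≥0∞)⁻¹ ≤ 1 :=
    ENNReal.inv_le_one.mpr (Nat.one_le_cast.mpr
      (Nat.one_le_iff_ne_zero.mpr (mt Ideal.absNorm_eq_zero_iff.mp hq0)))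
  rw [eulerFactor, ENNReal.toReal_inv, ENNReal.toReal_sub_of_le hle ENNReal.one_ne_top,
    ENNReal.toReal_one, ENNReal.toReal_inv, ENNReal.toReal_natCast]

theorem toReal_invNormSum {W : Set (Ideal S)} (hW : ∀ b ∈ W, b ≠ ⊥) :
    (invNormSum W).toReal = ∑' b : W, (Ideal.absNorm (b : Ideal S) : ℝ)⁻¹ := by
  have hfin : ∀ b : W, (Ideal.absNorm (b : Ideal S) : ℝ≥0∞)⁻¹ ≠ ⊤ := fun b =>
    ENNReal.inv_ne_top.mpr (Nat.cast_ne_zero.mpr (mt Ideal.absNorm_eq_zero_iff.mp (hW b b.2)))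
  rw [invNormSum, ENNReal.tsum_toReal_eq hfin]
  simp only [ENNReal.toReal_inv, ENNReal.toReal_natCast]

end AbsNorm

section Smooth

variable {K : Type*} [Field K] [NumberField K] {P : Set (Ideal (𝓞 K))} {q b : Ideal (𝓞 K)}

theorem isSmoothIdeal_empty_iff : IsSmoothIdeal K ∅ b ↔ b = ⊤ := by
  refine ⟨fun ⟨hb0, hb⟩ => by_contra fun hne => ?_, ?_⟩
  · obtain ⟨M, hM, hle⟩ := Ideal.exists_le_maximal b hne
    exact hb M hM.isPrime (fun h => hb0 (le_bot_iff.mp (h ▸ hle))) hle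
  · rintro rfl
    exact ⟨top_ne_bot, fun q hq _ hle => absurd (top_le_iff.mp hle) hq.ne_top⟩

theorem IsSmoothIdeal.not_dvd (hb : IsSmoothIdeal K P b) (hq : q.IsPrime) (hq0 : q ≠ ⊥)
    (hqP : q ∉ P) : ¬ q ∣ b :=
  fun hdvd => hqP (hb.2 q hq hq0 (Ideal.le_of_dvd hdvd))

theorem IsSmoothIdeal.pow_mul {c : Ideal (𝓞 K)} (hc : IsSmoothIdeal K P c) (hq : q.IsPrime)
    (hq0 : q ≠ ⊥) (j : ℕ) : IsSmoothIdeal K (insert q P) (q ^ j * c) := by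
  refine ⟨mul_ne_zero (pow_ne_zero j hq0) hc.1, fun r hr hr0 hle => ?_⟩
  rcases hr.mul_le.mp hle with hqr | hcr
  · exact .inl ((hq.isMaximal hq0).eq_of_le hr.ne_top (hr.le_of_pow_le hqr)).symm
  · exact .inr (hc.2 r hr hr0 hcr)

theorem setOf_isSmoothIdeal_insert (hq : q.IsPrime) (hq0 : q ≠ ⊥) :
    {b | IsSmoothIdeal K (insert q P) b} =
      Set.range fun x : ℕ × {c | IsSmoothIdeal K P c} => q ^ x.1 * (x.2 : Ideal (𝓞 K)) := by
  refine Set.ext fun b => ⟨fun ⟨hb0, hb⟩ => ?_, ?_⟩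
  · obtain ⟨j, c, hqc, rfl⟩ := WfDvdMonoid.max_power_factor (by simpa using hb0)
      (Ideal.prime_of_isPrime hq0 hq).irreducible
    refine ⟨(j, ⟨c, fun hc => hb0 (by rw [hc, Ideal.mul_bot]), fun r hr hr0 hle => ?_⟩), rfl⟩
    rcases hb r hr hr0 (Ideal.mul_le_right.trans hle) with rfl | hrP
    · exact absurd (Ideal.dvd_iff_le.mpr hle) hqc
    · exact hrP
  · rintro ⟨⟨j, c, hc⟩, rfl⟩
    exact hc.pow_mul hq hq0 j

theorem injective_pow_mul_of_isSmoothIdeal (hq : q.IsPrime) (hq0 : q ≠ ⊥) (hqP : q ∉ P)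
    {W : Set (Ideal (𝓞 K))} (hW : W ⊆ {c | IsSmoothIdeal K P c}) :
    Function.Injective fun x : ℕ × W => q ^ x.1 * (x.2 : Ideal (𝓞 K)) := by
  rintro ⟨j, c⟩ ⟨j', c'⟩ h
  obtain ⟨rfl, hcc'⟩ := (pow_mul_eq_pow_mul_iff_of_not_dvd (by simpa using hq0)
    ((hW c.2).not_dvd hq hq0 hqP) ((hW c'.2).not_dvd hq hq0 hqP)).mp h
  rw [Subtype.ext hcc']

end Smooth

theorem image_Iio_add_one {α : Type*} (p : ℕ → α) (k : ℕ) :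
    p '' Set.Iio (k + 1) = insert (p k) (p '' Set.Iio k) := by
  rw [← Order.succ_eq_add_one, Order.Iio_succ_eq_insert, Set.image_insert_eq]

theorem Function.Injective.notMem_image_Iio_self {α : Type*} {p : ℕ → α}
    (hinj : Function.Injective p) (k : ℕ) : p k ∉ p '' Set.Iio k :=
  fun h => lt_irrefl k (Set.mem_Iio.mp (hinj.mem_set_image.mp h))

section Sequence

variable {K : Type*} [Field K] [NumberField K] {p : ℕ → Ideal (𝓞 K)}

theorem invNormSum_setOf_isSmoothIdeal (hp : ∀ n, (p n).IsPrime) (hp0 : ∀ n, p n ≠ ⊥)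
    (hinj : Function.Injective p) (k : ℕ) :
    invNormSum {b | IsSmoothIdeal K (p '' Set.Iio k) b} =
      ∏ i ∈ Finset.range k, eulerFactor (p i) := by
  induction k with
  | zero =>
    have hP : p '' Set.Iio 0 = ∅ := by simp
    have hset : {b | IsSmoothIdeal K ∅ b} = {⊤} := Set.ext fun _ => isSmoothIdeal_empty_iff
    rw [hP, hset, invNormSum]
    simp
  | succ k ih =>
    rw [image_Iio_add_one, setOf_isSmoothIdeal_insert (hp k) (hp0 k),
      invNormSum_range_pow_mul _ _ (injective_pow_mul_of_isSmoothIdeal (hp k) (hp0 k)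
        (hinj.notMem_image_Iio_self k) subset_rfl),
      ih, Finset.prod_range_succ, mul_comm]

def smoothMultiples (K : Type*) [Field K] [NumberField K] (𝒜 P : Set (Ideal (𝓞 K))) :
    Set (Ideal (𝓞 K)) :=
  {b | IsSmoothIdeal K P b ∧ ∃ a ∈ 𝒜, b ≤ a}

theorem eulerFactor_mul_invNormSum_smoothMultiples_le {𝒜 P : Set (Ideal (𝓞 K))}
    {q : Ideal (𝓞 K)} (hq : q.IsPrime) (hq0 : q ≠ ⊥) (hqP : q ∉ P) :
    eulerFactor q * invNormSum (smoothMultiples K 𝒜 P) ≤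
      invNormSum (smoothMultiples K 𝒜 (insert q P)) := by
  rw [← invNormSum_range_pow_mul q _
    (injective_pow_mul_of_isSmoothIdeal hq hq0 hqP fun _ hc => hc.1)]
  refine invNormSum_mono ?_
  rintro _ ⟨⟨j, c, hc, a, ha, hca⟩, rfl⟩
  exact ⟨hc.pow_mul hq hq0 j, a, ha, Ideal.mul_le_right.trans hca⟩

noncomputable def multBENNReal (K : Type*) [Field K] [NumberField K]
    (𝒜 : Set (Ideal (𝓞 K))) (p : ℕ → Ideal (𝓞 K)) (k : ℕ) : ℝ≥0∞ :=
  invNormSum (smoothMultiples K 𝒜 (p '' Set.Iio k)) / ∏ i ∈ Finset.range k, eulerFactor (p i)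

variable {𝒜 : Set (Ideal (𝓞 K))}

theorem multB_eq_toReal_multBENNReal (hp0 : ∀ n, p n ≠ ⊥) (k : ℕ) :
    multB K 𝒜 p k = (multBENNReal K 𝒜 p k).toReal := by
  rw [multBENNReal, ENNReal.toReal_div, ENNReal.toReal_prod,
    toReal_invNormSum fun b hb => hb.1.1, div_eq_inv_mul]
  simp only [toReal_eulerFactor (hp0 _)]
  rfl

theorem multBENNReal_le_one (hp : ∀ n, (p n).IsPrime) (hp0 : ∀ n, p n ≠ ⊥)
    (hinj : Function.Injective p) (k : ℕ) : multBENNReal K 𝒜 p k ≤ 1 := by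
  refine ENNReal.div_le_of_le_mul ?_
  rw [one_mul, ← invNormSum_setOf_isSmoothIdeal hp hp0 hinj]
  exact invNormSum_mono fun _ hb => hb.1

theorem monotone_multBENNReal (hp : ∀ n, (p n).IsPrime) (hp0 : ∀ n, p n ≠ ⊥)
    (hinj : Function.Injective p) : Monotone (multBENNReal K 𝒜 p) := by
  refine monotone_nat_of_le_succ fun k => ?_
  calc multBENNReal K 𝒜 p k
      = eulerFactor (p k) * invNormSum (smoothMultiples K 𝒜 (p '' Set.Iio k)) /
          (eulerFactor (p k) * ∏ i ∈ Finset.range k, eulerFactor (p i)) :=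
        (ENNReal.mul_div_mul_left _ _ (eulerFactor_ne_zero _)
          (eulerFactor_ne_top (hp k) (hp0 k))).symm
    _ ≤ multBENNReal K 𝒜 p (k + 1) := by
        rw [multBENNReal, Finset.prod_range_succ, mul_comm _ (eulerFactor (p k)),
          image_Iio_add_one]
        exact ENNReal.div_le_div_right (eulerFactor_mul_invNormSum_smoothMultiples_le
          (hp k) (hp0 k) (hinj.notMem_image_Iio_self k)) _

end Sequence

theorem multB_monotone_bounded_general (K : Type*) [Field K] [NumberField K]
    (𝒜 : Set (Ideal (𝓞 K)))
    (p : ℕ → Ideal (𝓞 K)) (hp : ∀ n, (p n).IsPrime) (hp0 : ∀ n, p n ≠ ⊥)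
    (hinj : Function.Injective p) :
    Monotone (multB K 𝒜 p) ∧ (∀ k, multB K 𝒜 p k ≤ 1) ∧
      ∃ B : ℝ, Tendsto (multB K 𝒜 p) atTop (𝓝 B) := by
  have hB : multB K 𝒜 p = fun k => (multBENNReal K 𝒜 p k).toReal :=
    funext (multB_eq_toReal_multBENNReal hp0)
  have hle_one := multBENNReal_le_one (𝒜 := 𝒜) hp hp0 hinj
  have hmono : Monotone (multB K 𝒜 p) := hB ▸ fun _ k hjk =>
    ENNReal.toReal_mono (ne_top_of_le_ne_top ENNReal.one_ne_top (hle_one k))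
      (monotone_multBENNReal hp hp0 hinj hjk)
  have hbdd : ∀ k, multB K 𝒜 p k ≤ 1 := fun k => hB ▸
    (ENNReal.toReal_mono ENNReal.one_ne_top (hle_one k)).trans_eq ENNReal.toReal_one
  exact ⟨hmono, hbdd, _, tendsto_atTop_ciSup hmono ⟨1, Set.forall_mem_range.2 hbdd⟩⟩

/-- with the primes enumerated in non-decreasing order of norm, the
sequence `B_k` is non-decreasing and bounded above by `1`, hence converges. -/
theorem multB_monotone_bounded (K : Type*) [Field K] [NumberField K]
    (𝒜 : Set (Ideal (𝓞 K))) (h𝒜 : ∀ a ∈ 𝒜, a ≠ ⊥) (h𝒜c : 𝒜.Countable)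
    (p : ℕ → Ideal (𝓞 K)) (hp : ∀ n, (p n).IsPrime) (hp0 : ∀ n, p n ≠ ⊥)
    (hinj : Function.Injective p)
    (hmono : Monotone fun n => Ideal.absNorm (p n))
    (hsurj : ∀ q : Ideal (𝓞 K), q.IsPrime → q ≠ ⊥ → ∃ n, p n = q) :
    Monotone (multB K 𝒜 p) ∧ (∀ k, multB K 𝒜 p k ≤ 1) ∧
      ∃ B : ℝ, Tendsto (multB K 𝒜 p) atTop (𝓝 B) :=
  multB_monotone_bounded_general K 𝒜 p hp hp0 hinj
end
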